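/- arXiv:1902.04456 — 5 statements merged into one kernel-verified Lean document; each statement's English description precedes it below -/
import Mathlib

section
/- Let 0 < t_1 < … < t_n, let S_0 > 0, let 𝒦_i ⊂ (0,∞) be finite strike sets and C_i^K ≥ 0 given call prices for K ∈ 𝒦_i, 1 ≤ i ≤ n. Let M_n be the set of probability measures ℙ on [0,∞)^n (with coordinate process S_1,…,S_n) such that E^ℙ[(S_i−K)_+] = C_i^K for all K ∈ 𝒦_i and all i, and E^ℙ[S_i | σ(S_1,…,S_{i−1})] = S_{i−1} ℙ-a.s. for all i ≥ 2 and E^ℙ[S_1] = S_0. Let M_n^Markov be the subset of those ℙ ∈ M_n for which the coordinate process is Markov, i.e. for every i ≥ 2 and every bounded measurable f : ℝ → ℝ, E^ℙ[f(S_i) | σ(S_1,…,S_{i−1})] = E^ℙ[f(S_i) | σ(S_{i−1})] ℙ-a.s. Then M_n^Markov is non-empty if and only if M_n is non-empty. -/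
/-!
Given a calibrated martingale measure `P`, let `κᵢ` be the conditional law of `Sᵢ₊₁` given `Sᵢ`
under `P`, and resample in turn `S₁, S₂, …` from `κᵢ(Sᵢ, ·)`. The resulting `Q` is the law of the
Markov chain started at the law of `S₀` under `P` with transitions `κᵢ`, so under `Q` the
conditional law of `Sᵢ₊₁` given the whole past is `κᵢ(Sᵢ, ·)`: this is the Markov property. By
induction on `i`, `(Sᵢ, Sᵢ₊₁)` has the same law under `Q` as under `P`; hence `Q` reprices every
call and the mean, and `E_Q[Sᵢ₊₁ | S₀, …, Sᵢ] = ∫ y κᵢ(Sᵢ, dy) = E_P[Sᵢ₊₁ | Sᵢ] = Sᵢ`.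
-/

open MeasureTheory Finset ProbabilityTheory

lemma MeasureTheory.iSup_comap_eval_le_eq_piLE {ι : Type*} [Preorder ι] {X : ι → Type*}
    [∀ i, MeasurableSpace (X i)] (i : ι) :
    ⨆ j, ⨆ _ : j ≤ i, MeasurableSpace.comap (fun x : Π j, X j => x j) inferInstance =
      Filtration.piLE (X := X) i := by
  simp only [Filtration.piLE, MeasurableSpace.pi, MeasurableSpace.comap_iSup,
    MeasurableSpace.comap_comp]
  rw [iSup_subtype']
  rfl

lemma MeasureTheory.iSup_comap_eval_le_eq_comap_frestrictLe {ι : Type*} [Preorder ι]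
    [LocallyFiniteOrderBot ι] {X : ι → Type*} [∀ i, MeasurableSpace (X i)] (i : ι) :
    ⨆ j, ⨆ _ : j ≤ i, MeasurableSpace.comap (fun x : Π j, X j => x j) inferInstance =
      MeasurableSpace.pi.comap (Preorder.frestrictLe i) := by
  rw [iSup_comap_eval_le_eq_piLE, Filtration.piLE_eq_comap_frestrictLe]

namespace MeasureTheory.Measure

variable {α β Ω : Type*} {mα : MeasurableSpace α} {mβ : MeasurableSpace β}
  {mΩ : MeasurableSpace Ω}

lemma map_prodMap_compProd_comap (μ : Measure α) [SFinite μ] (κ : Kernel β Ω)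
    [IsSFiniteKernel κ] {f : α → β} (hf : Measurable f) :
    (μ ⊗ₘ κ.comap f hf).map (Prod.map f id) = μ.map f ⊗ₘ κ := by
  ext s hs
  rw [map_apply (hf.prodMap measurable_id) hs, compProd_apply (hf.prodMap measurable_id hs),
    compProd_apply hs, lintegral_map (Kernel.measurable_kernel_prodMk_left hs) hf]
  rfl

end MeasureTheory.Measure

namespace ProbabilityTheory

variable {α β Ω F : Type*} {m mα : MeasurableSpace α} {mβ : MeasurableSpace β}
  [MeasurableSpace Ω] [StandardBorelSpace Ω] [Nonempty Ω]
  [NormedAddCommGroup F] [NormedSpace ℝ F] [CompleteSpace F]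
  {μ : Measure α} [IsFiniteMeasure μ]

lemma condExp_ae_eq_integral_of_map_eq_compProd {X : α → β} {Y : α → Ω} (hX : Measurable X)
    (hY : Measurable Y) {κ : Kernel β Ω} [IsFiniteKernel κ]
    (hκ : μ.map (fun a => (X a, Y a)) = μ.map X ⊗ₘ κ) {f : Ω → F}
    (hf : StronglyMeasurable f) (hfY : Integrable (fun a => f (Y a)) μ) :
    μ[fun a => f (Y a) | mβ.comap X] =ᵐ[μ] fun a => ∫ y, f y ∂κ (X a) := by
  filter_upwards [condExp_ae_eq_integral_condDistrib hX hY.aemeasurable hf hfY,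
    ae_of_ae_map hX.aemeasurable
      (condDistrib_ae_eq_of_measure_eq_compProd X hY.aemeasurable hκ)] with a h1 h2
  rw [h1, h2]

lemma condExp_comap_ae_eq_of_condExp_ae_eq (hm : m ≤ mα) {X Y : α → ℝ}
    (hXm : Measurable[m] X) (hX : Integrable X μ) (h : μ[Y | m] =ᵐ[μ] X) :
    μ[Y | MeasurableSpace.comap X inferInstance] =ᵐ[μ] X := by
  have hle : MeasurableSpace.comap X inferInstance ≤ m := hXm.comap_le
  calc μ[Y | MeasurableSpace.comap X inferInstance]
      =ᵐ[μ] μ[μ[Y | m] | MeasurableSpace.comap X inferInstance] :=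
        (condExp_condExp_of_le hle hm).symm
    _ =ᵐ[μ] μ[X | MeasurableSpace.comap X inferInstance] := condExp_congr_ae h
    _ = X := condExp_of_stronglyMeasurable (hle.trans hm)
        (Measurable.of_comap_le le_rfl).stronglyMeasurable hX

lemma ae_integral_condDistrib_eq_of_condExp_ae_eq (hm : m ≤ mα) {X Y : α → ℝ}
    (hXm : Measurable[m] X) (hX : Integrable X μ) (hY : Integrable Y μ)
    (h : μ[Y | m] =ᵐ[μ] X) :
    ∀ᵐ x ∂μ.map X, ∫ y, y ∂condDistrib Y X μ x = x := by
  have hXm' : Measurable X := hXm.mono hm le_rfl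
  refine (ae_map_iff hXm'.aemeasurable
    (measurableSet_eq_fun stronglyMeasurable_id.integral_kernel.measurable measurable_id)).mpr ?_
  filter_upwards [condExp_comap_ae_eq_of_condExp_ae_eq hm hXm hX h,
    condExp_ae_eq_integral_condDistrib' hXm' hY] with a h1 h2
  exact h2.symm.trans h1

open Function

section Resample

variable {ι E γ : Type*} [DecidableEq ι] [MeasurableSpace E] [MeasurableSpace γ]

noncomputable def resample (j : ι) (κ : Kernel (ι → E) E) (μ : Measure (ι → E)) :
    Measure (ι → E) :=
  (μ ⊗ₘ κ).map fun p => update p.1 j p.2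

variable {j : ι} {μ : Measure (ι → E)}

instance isProbabilityMeasure_resample (κ : Kernel (ι → E) E) [IsMarkovKernel κ]
    [IsProbabilityMeasure μ] : IsProbabilityMeasure (resample j κ μ) :=
  Measure.isProbabilityMeasure_map measurable_update'.aemeasurable

lemma map_resample_of_update_eq (κ : Kernel (ι → E) E) [IsMarkovKernel κ] [SFinite μ]
    {φ : (ι → E) → γ} (hφ : Measurable φ) (h : ∀ x y, φ (update x j y) = φ x) :
    (resample j κ μ).map φ = μ.map φ := by
  have : φ ∘ (fun p : (ι → E) × E => update p.1 j p.2) = φ ∘ Prod.fst :=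
    funext fun p => h p.1 p.2
  rw [resample, Measure.map_map hφ measurable_update', this,
    ← Measure.map_map hφ measurable_fst, ← Measure.fst, Measure.fst_compProd]

lemma map_resample_prod (η : Kernel γ E) [IsSFiniteKernel η] [SFinite μ]
    {φ : (ι → E) → γ} (hφ : Measurable φ) (h : ∀ x y, φ (update x j y) = φ x) :
    (resample j (η.comap φ hφ) μ).map (fun x => (φ x, x j)) = μ.map φ ⊗ₘ η := by
  have : (fun x => (φ x, x j)) ∘ (fun p : (ι → E) × E => update p.1 j p.2) =
      Prod.map φ id :=
    funext fun p => by simp [h, Prod.map]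
  rw [resample, Measure.map_map (by fun_prop) measurable_update', this,
    Measure.map_prodMap_compProd_comap]

end Resample

section Chain

variable {n : ℕ} {E γ : Type*} [MeasurableSpace E] [MeasurableSpace γ]

noncomputable def resampleChain (κ : (k : ℕ) → k + 1 < n → Kernel E E)
    (μ : Measure (Fin n → E)) : ℕ → Measure (Fin n → E)
  | 0 => μ
  | k + 1 =>
    if h : k + 1 < n then
      resample ⟨k + 1, h⟩
        ((κ k h).comap (fun x => x ⟨k, by omega⟩) (measurable_pi_apply _))
        (resampleChain κ μ k)
    else resampleChain κ μ k

variable {κ : (k : ℕ) → k + 1 < n → Kernel E E} [∀ k h, IsMarkovKernel (κ k h)]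
  {μ : Measure (Fin n → E)} [IsProbabilityMeasure μ]

instance isProbabilityMeasure_resampleChain (k : ℕ) :
    IsProbabilityMeasure (resampleChain κ μ k) := by
  induction k with
  | zero => assumption
  | succ k ih => rw [resampleChain]; split <;> infer_instance

lemma map_resampleChain_of_le {φ : (Fin n → E) → γ} (hφ : Measurable φ) {m : ℕ}
    (h : ∀ j : Fin n, m < j.val → ∀ x y, φ (update x j y) = φ x) {k : ℕ}
    (hmk : m ≤ k) : (resampleChain κ μ k).map φ = (resampleChain κ μ m).map φ := by
  induction k, hmk using Nat.le_induction with
  | base => rfl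
  | succ k hmk ih =>
    rw [resampleChain]
    split_ifs with hk
    · rw [map_resample_of_update_eq _ hφ (h _ (by simp only; omega)), ih]
    · exact ih

lemma map_resampleChain_restrict_succ (i : Fin n) (hi : i.val + 1 < n) {k : ℕ}
    (hik : i.val + 1 ≤ k) :
    (resampleChain κ μ k).map (fun x => (Preorder.frestrictLe i x, x ⟨i.val + 1, hi⟩)) =
      (resampleChain κ μ k).map (Preorder.frestrictLe i) ⊗ₘ
        (κ i hi).comap (fun v => v ⟨i, mem_Iic.2 le_rfl⟩) (measurable_pi_apply _) := by
  have hfr : ∀ j : Fin n, i.val < j.val → ∀ (x : Fin n → E) y,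
      Preorder.frestrictLe i (update x j y) = Preorder.frestrictLe i x := by
    intro j hj x y
    funext l
    exact update_of_ne (fun hl => by have := mem_Iic.1 l.2; rw [hl] at this; omega) _ _
  have hpair : ∀ j : Fin n, i.val + 1 < j.val → ∀ (x : Fin n → E) y,
      (Preorder.frestrictLe i (update x j y), update x j y ⟨i.val + 1, hi⟩) =
        (Preorder.frestrictLe i x, x ⟨i.val + 1, hi⟩) := by
    intro j hj x y
    rw [hfr j (by omega), update_of_ne (by rw [ne_eq, Fin.ext_iff, Fin.val_mk]; omega)]
  have hfr_succ := hfr ⟨i.val + 1, hi⟩ (by simp)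
  rw [map_resampleChain_of_le (by fun_prop) hpair hik,
    map_resampleChain_of_le (Preorder.measurable_frestrictLe i) (fun j hj => hfr j (by omega)) hik,
    resampleChain, dif_pos hi,
    map_resample_of_update_eq _ (Preorder.measurable_frestrictLe i) hfr_succ]
  exact map_resample_prod (μ := resampleChain κ μ i)
    ((κ i hi).comap (fun v => v ⟨i, mem_Iic.2 le_rfl⟩) (measurable_pi_apply _))
    (Preorder.measurable_frestrictLe i) hfr_succ

lemma map_resampleChain_eval_succ (i : Fin n) (hi : i.val + 1 < n) {k : ℕ}
    (hik : i.val + 1 ≤ k) :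
    (resampleChain κ μ k).map (fun x => (x i, x ⟨i.val + 1, hi⟩)) =
      (resampleChain κ μ k).map (fun x => x i) ⊗ₘ κ i hi := by
  have h := congrArg
    (Measure.map (Prod.map (fun v : Iic i → E => v ⟨i, mem_Iic.2 le_rfl⟩) id))
    (map_resampleChain_restrict_succ (κ := κ) (μ := μ) i hi hik)
  rwa [Measure.map_map (by fun_prop) (by fun_prop), Measure.map_prodMap_compProd_comap,
    Measure.map_map (measurable_pi_apply (⟨i, mem_Iic.2 le_rfl⟩ : Iic i))
      (Preorder.measurable_frestrictLe (X := fun _ : Fin n => E) i)] at h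

lemma map_resampleChain_eval_zero (hn : 0 < n) (k : ℕ) :
    (resampleChain κ μ k).map (fun x => x ⟨0, hn⟩) = μ.map (fun x => x ⟨0, hn⟩) :=
  map_resampleChain_of_le (measurable_pi_apply _) (m := 0)
    (fun j hj x y => update_of_ne (by rw [ne_eq, Fin.ext_iff, Fin.val_mk]; omega) _ _)
    (Nat.zero_le k)

end Chain

section Markovization

variable {n : ℕ} {E : Type*} [MeasurableSpace E] [StandardBorelSpace E] [Nonempty E]

noncomputable def succCondDistrib (μ : Measure (Fin n → E)) [IsFiniteMeasure μ] (k : ℕ)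
    (hk : k + 1 < n) : Kernel E E :=
  condDistrib (fun x => x ⟨k + 1, hk⟩) (fun x => x ⟨k, by omega⟩) μ

noncomputable def markovization (μ : Measure (Fin n → E)) [IsFiniteMeasure μ] :
    Measure (Fin n → E) :=
  resampleChain (succCondDistrib μ) μ (n - 1)

instance (μ : Measure (Fin n → E)) [IsFiniteMeasure μ] (k : ℕ) (hk : k + 1 < n) :
    IsMarkovKernel (succCondDistrib μ k hk) := by
  rw [succCondDistrib]; infer_instance

variable (μ : Measure (Fin n → E)) [IsProbabilityMeasure μ]

instance : IsProbabilityMeasure (markovization μ) :=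
  isProbabilityMeasure_resampleChain _

lemma map_markovization_restrict_succ (i : Fin n) (hi : i.val + 1 < n) :
    (markovization μ).map (fun x => (Preorder.frestrictLe i x, x ⟨i.val + 1, hi⟩)) =
      (markovization μ).map (Preorder.frestrictLe i) ⊗ₘ
        (succCondDistrib μ i hi).comap (fun v => v ⟨i, mem_Iic.2 le_rfl⟩)
          (measurable_pi_apply _) :=
  map_resampleChain_restrict_succ i hi (by omega)

lemma map_markovization_eval_succ (i : Fin n) (hi : i.val + 1 < n) :
    (markovization μ).map (fun x => (x i, x ⟨i.val + 1, hi⟩)) =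
      (markovization μ).map (fun x => x i) ⊗ₘ succCondDistrib μ i hi :=
  map_resampleChain_eval_succ i hi (by omega)

lemma map_markovization_eval (i : Fin n) :
    (markovization μ).map (fun x => x i) = μ.map (fun x => x i) := by
  obtain ⟨k, hk⟩ := i
  induction k with
  | zero => exact map_resampleChain_eval_zero hk _
  | succ k ih =>
    have hpair := map_markovization_eval_succ μ ⟨k, by omega⟩ hk
    rw [ih] at hpair
    calc (markovization μ).map (fun x => x ⟨k + 1, hk⟩)
        = ((markovization μ).map (fun x => (x ⟨k, by omega⟩, x ⟨k + 1, hk⟩))).snd := by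
          rw [Measure.snd_map_prodMk (measurable_pi_apply _)]
      _ = μ.map (fun x => x ⟨k + 1, hk⟩) := by
          rw [hpair, Measure.snd_compProd, succCondDistrib,
            condDistrib_comp_map (measurable_pi_apply _).aemeasurable
            (measurable_pi_apply _).aemeasurable]

lemma identDistrib_markovization_eval (i : Fin n) :
    IdentDistrib (fun x => x i) (fun x => x i) (markovization μ) μ :=
  ⟨(measurable_pi_apply i).aemeasurable, (measurable_pi_apply i).aemeasurable,
    map_markovization_eval μ i⟩

variable {F : Type*} [NormedAddCommGroup F] [NormedSpace ℝ F] [CompleteSpace F]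
  (i : Fin n) (hi : i.val + 1 < n) {f : E → F}

lemma condExp_markovization_restrict (hf : StronglyMeasurable f)
    (hfi : Integrable (fun x => f (x ⟨i.val + 1, hi⟩)) (markovization μ)) :
    (markovization μ)[fun x => f (x ⟨i.val + 1, hi⟩) |
        MeasurableSpace.comap (Preorder.frestrictLe i) MeasurableSpace.pi]
      =ᵐ[markovization μ] fun x => ∫ y, f y ∂succCondDistrib μ i hi (x i) :=
  condExp_ae_eq_integral_of_map_eq_compProd (Preorder.measurable_frestrictLe i)
    (measurable_pi_apply _) (map_markovization_restrict_succ μ i hi) hf hfi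

lemma condExp_markovization_eval (hf : StronglyMeasurable f)
    (hfi : Integrable (fun x => f (x ⟨i.val + 1, hi⟩)) (markovization μ)) :
    (markovization μ)[fun x => f (x ⟨i.val + 1, hi⟩) |
        MeasurableSpace.comap (fun x => x i) inferInstance]
      =ᵐ[markovization μ] fun x => ∫ y, f y ∂succCondDistrib μ i hi (x i) :=
  condExp_ae_eq_integral_of_map_eq_compProd (measurable_pi_apply _)
    (measurable_pi_apply _) (map_markovization_eval_succ μ i hi) hf hfi

end Markovization

lemma condExp_markovization_restrict_ae_eq_eval {n : ℕ} (μ : Measure (Fin n → ℝ))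
    [IsProbabilityMeasure μ] (i : Fin n) (hi : i.val + 1 < n)
    (hint : Integrable (fun x => x i) μ)
    (hint_succ : Integrable (fun x => x ⟨i.val + 1, hi⟩) μ)
    (hmart : μ[fun x => x ⟨i.val + 1, hi⟩ |
        MeasurableSpace.comap (Preorder.frestrictLe i) MeasurableSpace.pi] =ᵐ[μ] fun x => x i) :
    (markovization μ)[fun x => x ⟨i.val + 1, hi⟩ |
        MeasurableSpace.comap (Preorder.frestrictLe i) MeasurableSpace.pi]
      =ᵐ[markovization μ] fun x => x i := by
  have hXm : Measurable[MeasurableSpace.comap (Preorder.frestrictLe i) MeasurableSpace.pi]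
      (fun x : Fin n → ℝ => x i) :=
    (measurable_pi_apply (⟨i, mem_Iic.2 le_rfl⟩ : Iic i)).comp
      (comap_measurable (Preorder.frestrictLe i))
  have hmean := ae_integral_condDistrib_eq_of_condExp_ae_eq
    (Preorder.measurable_frestrictLe i).comap_le hXm hint hint_succ hmart
  rw [← map_markovization_eval] at hmean
  filter_upwards [condExp_markovization_restrict μ i hi stronglyMeasurable_id
      ((identDistrib_markovization_eval μ _).integrable_iff.2 hint_succ),
    ae_of_ae_map (measurable_pi_apply i).aemeasurable hmean] with x h1 h2
  exact h1.trans h2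

end ProbabilityTheory

theorem stmt0_general (n : ℕ) (hn : 0 < n) (S0 : ℝ) (𝒦 : Fin n → Finset ℝ) (C : Fin n → ℝ → ℝ)
    (Mn MnMarkov : Set (Measure (Fin n → ℝ)))
    (hMn : Mn = {P | IsProbabilityMeasure P ∧
      P {x | ∀ i, 0 ≤ x i} = 1 ∧
      (∀ i : Fin n, Integrable (fun x => x i) P) ∧
      (∀ i : Fin n, ∀ K ∈ 𝒦 i, ∫ x, max (x i - K) 0 ∂P = C i K) ∧
      (∫ x, x ⟨0, hn⟩ ∂P) = S0 ∧
      (∀ i : Fin n, ∀ hi : i.val + 1 < n,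
        P[fun x => x ⟨i.val + 1, hi⟩ |
            ⨆ j : Fin n, ⨆ _ : j ≤ i,
              MeasurableSpace.comap (fun x : Fin n → ℝ => x j) inferInstance]
          =ᵐ[P] fun x => x i)})
    (hMnMarkov : MnMarkov = {P ∈ Mn |
      ∀ i : Fin n, ∀ hi : i.val + 1 < n, ∀ f : ℝ → ℝ, Measurable f →
        (∃ B : ℝ, ∀ y : ℝ, |f y| ≤ B) →
        P[fun x => f (x ⟨i.val + 1, hi⟩) |
            ⨆ j : Fin n, ⨆ _ : j ≤ i,
              MeasurableSpace.comap (fun x : Fin n → ℝ => x j) inferInstance]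
          =ᵐ[P]
        P[fun x => f (x ⟨i.val + 1, hi⟩) |
            MeasurableSpace.comap (fun x : Fin n → ℝ => x i) inferInstance]}) :
    MnMarkov.Nonempty ↔ Mn.Nonempty := by
  subst hMn hMnMarkov
  refine ⟨fun ⟨P, hP, _⟩ => ⟨P, hP⟩, ?_⟩
  rintro ⟨P, hP, horth, hint, hcall, hmean, hmart⟩
  have hlaw := identDistrib_markovization_eval P
  simp only [iSup_comap_eval_le_eq_comap_frestrictLe] at hmart ⊢
  refine ⟨markovization P, ⟨inferInstance, ?_, fun i => (hlaw i).integrable_iff.2 (hint i),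
    fun i K hK => ?_, (hlaw _).integral_eq.trans hmean, fun i hi => ?_⟩, ?_⟩
  · have hmeas : Measurable fun x : Fin n → ℝ => ∀ i, 0 ≤ x i := Measurable.forall fun i =>
      measurableSet_setOfPred.1 (measurableSet_le measurable_const (measurable_pi_apply i))
    rw [← ae_iff_prob_eq_one hmeas] at horth ⊢
    exact ae_all_iff.2 fun i => (hlaw i).symm.ae_mem_snd measurableSet_Ici (ae_all_iff.1 horth i)
  · have hcall_law := (hlaw i).comp (by fun_prop : Measurable fun s => max (s - K) 0)
    exact hcall_law.integral_eq.trans (hcall i K hK)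
  · exact condExp_markovization_restrict_ae_eq_eval P i hi (hint i) (hint _) (hmart i hi)
  · rintro i hi f hf ⟨B, hB⟩
    have hfi : Integrable (fun x => f (x ⟨i.val + 1, hi⟩)) (markovization P) :=
      .of_bound (hf.comp (measurable_pi_apply _)).aestronglyMeasurable B
        (ae_of_all _ fun x => (Real.norm_eq_abs _).trans_le (hB _))
    exact (condExp_markovization_restrict P i hi hf.stronglyMeasurable hfi).trans
      (condExp_markovization_eval P i hi hf.stronglyMeasurable hfi).symm

/-- existence of a calibrated martingale measure is equivalent to the
existence of a calibrated *Markov* martingale measure. Here measures live on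
`[0,∞)ⁿ` (encoded as measures on `Fin n → ℝ` giving full mass to the nonnegative
orthant), the coordinate process is `Sᵢ = x i`, calls are calibrated to `C i K` for
strikes `K ∈ 𝒦 i`, and the martingale/Markov properties are stated via conditional
expectations with respect to `σ(S₁,…,Sᵢ)` and `σ(Sᵢ)`. -/
theorem stmt0 (n : ℕ) (hn : 0 < n)
    (t : Fin n → ℝ) (ht : StrictMono t) (htpos : ∀ i, 0 < t i)
    (S0 : ℝ) (hS0 : 0 < S0)
    (𝒦 : Fin n → Finset ℝ) (h𝒦 : ∀ i, ∀ K ∈ 𝒦 i, 0 < K)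
    (C : Fin n → ℝ → ℝ) (hC : ∀ i, ∀ K ∈ 𝒦 i, 0 ≤ C i K)
    (Mn MnMarkov : Set (Measure (Fin n → ℝ)))
    (hMn : Mn = {P | IsProbabilityMeasure P ∧
      P {x | ∀ i, 0 ≤ x i} = 1 ∧
      (∀ i : Fin n, Integrable (fun x => x i) P) ∧
      (∀ i : Fin n, ∀ K ∈ 𝒦 i, ∫ x, max (x i - K) 0 ∂P = C i K) ∧
      (∫ x, x ⟨0, hn⟩ ∂P) = S0 ∧
      (∀ i : Fin n, ∀ hi : i.val + 1 < n,
        P[fun x => x ⟨i.val + 1, hi⟩ |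
            ⨆ j : Fin n, ⨆ _ : j ≤ i,
              MeasurableSpace.comap (fun x : Fin n → ℝ => x j) inferInstance]
          =ᵐ[P] fun x => x i)})
    (hMnMarkov : MnMarkov = {P ∈ Mn |
      ∀ i : Fin n, ∀ hi : i.val + 1 < n, ∀ f : ℝ → ℝ, Measurable f →
        (∃ B : ℝ, ∀ y : ℝ, |f y| ≤ B) →
        P[fun x => f (x ⟨i.val + 1, hi⟩) |
            ⨆ j : Fin n, ⨆ _ : j ≤ i,
              MeasurableSpace.comap (fun x : Fin n → ℝ => x j) inferInstance]
          =ᵐ[P]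
        P[fun x => f (x ⟨i.val + 1, hi⟩) |
            MeasurableSpace.comap (fun x : Fin n → ℝ => x i) inferInstance]}) :
    MnMarkov.Nonempty ↔ Mn.Nonempty :=
  stmt0_general n hn S0 𝒦 C Mn MnMarkov hMn hMnMarkov
end

section
/- Let (u_1^*, h_1^*, V^*) ∈ ℝ^{𝒳_1} × ℝ^{𝒳_1} × ℝ^{𝒦_2} be a global minimizer of G. Then the measure ℙ^*(ds_1,ds_2) := exp(−Σ_{K∈𝒦_2} V_K^*(s_2−K)_+ − u_1^*(s_1) − h_1^*(s_1)(s_2−s_1)) m_0(ds_1,ds_2) belongs to M̃₁₂(ℙ¹): it is a probability measure on 𝒳_1 × [0,∞) with first marginal ℙ¹, it satisfies ∫_{{s_1}×[0,∞)} (s_2−s_1) dℙ^* = 0 for every s_1 ∈ 𝒳_1, and C_2^{K,bid} ≤ ∫ (s_2−K)_+ dℙ^* ≤ C_2^{K,ask} for every K ∈ 𝒦_2. -/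
open MeasureTheory Finset

noncomputable section

/-- The penalty function `f^{K,bid/ask}(V, ω)` with `c⁻ = ΔC^bid`, `c⁺ = ΔC^ask`. -/
def fpen (cb ca w V : ℝ) : ℝ :=
  if cb ≤ V * w ∧ V * w ≤ ca then V ^ 2 * w / 2
  else if ca < V * w then ca * V - ca ^ 2 / (2 * w)
  else cb * V - cb ^ 2 / (2 * w)

/-- `Δ_{(u,h,V)}(s₁,s₂) = u(s₁) + h(s₁)(s₂ − s₁) + Σ_K V_K (s₂ − K)₊` for `s₁` in the
grid `X1` (and `0` off the grid, which is `m₀`-negligible). -/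
def Dlt (X1 : Finset ℝ) {k : ℕ} (K : Fin k → ℝ)
    (u h : X1 → ℝ) (V : Fin k → ℝ) (p : ℝ × ℝ) : ℝ :=
  (∑ a ∈ X1.attach, if (a : ℝ) = p.1 then u a + h a * (p.2 - p.1) else 0)
    + ∑ i, V i * max (p.2 - K i) 0

/-- The dual functional `G(u, h, V)` of the paper (for the pair of maturities). -/
def Gfun (X1 : Finset ℝ) (P1 : ℝ → ℝ) {k : ℕ} (K : Fin k → ℝ)
    (Cbid Cask ω : Fin k → ℝ) (m0 : Measure (ℝ × ℝ))
    (u h : X1 → ℝ) (V : Fin k → ℝ) : ℝ :=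
  (∑ a ∈ X1.attach, u a * P1 (a : ℝ))
    + (∑ i, fpen (Cbid i - (Cbid i + Cask i) / 2) (Cask i - (Cbid i + Cask i) / 2)
        (ω i) (V i))
    + (∑ i, V i * ((Cbid i + Cask i) / 2))
    + ∫ p, Real.exp (-(Dlt X1 K u h V p)) ∂m0

/-- Membership in `M̃₁₂(ℙ¹)`: probability measure on `𝒳₁ × [0,∞)` with first marginal
`ℙ¹`, satisfying the martingale constraint conditionally on each `s₁ ∈ 𝒳₁`, and whose
call prices at the strikes of `𝒦₂` lie within the bid/ask bounds. -/
def MemM12 (X1 : Finset ℝ) (P1 : ℝ → ℝ) {k : ℕ} (K : Fin k → ℝ)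
    (Cbid Cask : Fin k → ℝ) (P : Measure (ℝ × ℝ)) : Prop :=
  IsProbabilityMeasure P ∧
  P {p : ℝ × ℝ | p.1 ∈ X1 ∧ 0 ≤ p.2} = 1 ∧
  Integrable (fun p : ℝ × ℝ => p.2) P ∧
  (∀ s ∈ X1, (P {p : ℝ × ℝ | p.1 = s}).toReal = P1 s) ∧
  (∀ s ∈ X1, ∫ p in {q : ℝ × ℝ | q.1 = s}, (p.2 - p.1) ∂P = 0) ∧
  (∀ i : Fin k, Cbid i ≤ ∫ p, max (p.2 - K i) 0 ∂P ∧
    (∫ p, max (p.2 - K i) 0 ∂P) ≤ Cask i)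

/-!
Perturb the minimiser `x* = (u*, h*, V*)` of `G` along an arbitrary direction `y`. Since `Δ` is
linear in `x`, the exponential term of `G (x* - t • y)` is the moment generating function
`t ↦ ∫ exp (t Δ_y) dℙ*`; it is differentiable at `0` with derivative `∫ Δ_y dℙ*`, because `Δ`
grows at most linearly in `s₂` and `m₀` has all exponential moments. Every other term of `G` is
linear in `t` up to `O(t²)`: the penalty `f` is a Huber function whose derivative, the clamp
`fpenDeriv` of `V ω` to `[ΔC^bid, ΔC^ask]`, is Lipschitz. Minimality at `t = 0` therefore gives
the first-order condition
`∫ Δ_y dℙ* = ∑ u(s₁) ℙ¹[s₁] + ∑_K V_K (C^mid_K + fpenDeriv (V*_K))`.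
The direction `y = (1, 0, 0)` gives total mass one, and the coordinate directions give the
marginal, the martingale constraint, and call prices `C^mid + fpenDeriv (…) ∈ [C^bid, C^ask]`.
-/

open ProbabilityTheory Real

section ExpMoments

variable {α : Type*} [MeasurableSpace α] {μ : Measure α} {X φ d : α → ℝ} {A B A' B' : ℝ}

lemma integrableExpSet_eq_univ_of_abs_le (hX : integrableExpSet X μ = Set.univ)
    (hφ : Measurable φ) (hφX : ∀ x, |φ x| ≤ A + B * |X x|) :
    integrableExpSet φ μ = Set.univ := by
  refine Set.eq_univ_of_forall fun t => ?_
  have hXint : ∀ a, Integrable (fun x => exp (a * X x)) μ := fun a =>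
    Set.eq_univ_iff_forall.mp hX a
  refine (((hXint (|t| * B)).add (hXint (-(|t| * B)))).const_mul (exp (|t| * A))).mono'
    (hφ.const_mul t).exp.aestronglyMeasurable (ae_of_all _ fun x => ?_)
  have hlin : t * φ x ≤ |t| * A + |(|t| * B) * X x| := by
    have h1 : t * φ x ≤ |t| * |φ x| := (le_abs_self _).trans (abs_mul _ _).le
    have h2 : |t| * |φ x| ≤ |t| * A + |t| * B * |X x| := by
      nlinarith [mul_le_mul_of_nonneg_left (hφX x) (abs_nonneg t)]
    have h3 : |t| * B * |X x| ≤ |(|t| * B) * X x| := by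
      rw [abs_mul (|t| * B)]
      exact mul_le_mul_of_nonneg_right (le_abs_self _) (abs_nonneg _)
    linarith
  calc ‖exp (t * φ x)‖ = exp (t * φ x) := by rw [norm_eq_abs, abs_of_pos (exp_pos _)]
    _ ≤ exp (|t| * A) * exp |(|t| * B) * X x| := by
        rw [← exp_add]; exact exp_le_exp.mpr hlin
    _ ≤ exp (|t| * A) * (exp (|t| * B * X x) + exp (-(|t| * B) * X x)) := by
        rw [neg_mul]; exact mul_le_mul_of_nonneg_left (exp_abs_le _) (exp_pos _).le

/-- The paper's `ℙ*` is `expDensity m₀ Δ_{x*}`. -/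
def expDensity (μ : Measure α) (d : α → ℝ) : Measure α :=
  μ.withDensity fun x => ENNReal.ofReal (exp (-d x))

lemma expDensity_absolutelyContinuous : expDensity μ d ≪ μ :=
  withDensity_absolutelyContinuous _ _

lemma integral_expDensity (hd : Measurable d) (g : α → ℝ) :
    ∫ x, g x ∂expDensity μ d = ∫ x, exp (-d x) * g x ∂μ := by
  rw [expDensity, integral_withDensity_eq_integral_toReal_smul (by fun_prop)
    (ae_of_all _ fun _ => ENNReal.ofReal_lt_top)]
  simp only [ENNReal.toReal_ofReal (exp_pos _).le, smul_eq_mul]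

lemma integrableExpSet_expDensity_eq_univ (hX : integrableExpSet X μ = Set.univ)
    (hd : Measurable d) (hdX : ∀ x, |d x| ≤ A + B * |X x|)
    (hφ : Measurable φ) (hφX : ∀ x, |φ x| ≤ A' + B' * |X x|) :
    integrableExpSet φ (expDensity μ d) = Set.univ := by
  refine Set.eq_univ_of_forall fun t => ?_
  have hbound : ∀ x, |t * φ x - d x| ≤ (|t| * A' + A) + (|t| * B' + B) * |X x| := fun x => by
    have := mul_le_mul_of_nonneg_left (hφX x) (abs_nonneg t)
    calc |t * φ x - d x| ≤ |t| * |φ x| + |d x| := by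
          rw [← abs_mul]; exact abs_sub _ _
      _ ≤ _ := by nlinarith [hdX x]
  have := Set.eq_univ_iff_forall.mp (integrableExpSet_eq_univ_of_abs_le hX
    (φ := fun x => t * φ x - d x) ((hφ.const_mul t).sub hd) hbound) 1
  show Integrable _ _
  rw [expDensity, integrable_withDensity_iff_integrable_smul' (by fun_prop)
    (ae_of_all _ fun _ => ENNReal.ofReal_lt_top)]
  refine this.congr (ae_of_all _ fun x => ?_)
  simp only [ENNReal.toReal_ofReal (exp_pos _).le, smul_eq_mul, ← exp_add]
  ring_nf

lemma integrable_expDensity_of_abs_le (hX : integrableExpSet X μ = Set.univ)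
    (hd : Measurable d) (hdX : ∀ x, |d x| ≤ A + B * |X x|)
    (hφ : Measurable φ) (hφX : ∀ x, |φ x| ≤ A' + B' * |X x|) :
    Integrable φ (expDensity μ d) :=
  integrable_of_mem_interior_integrableExpSet
    (by simp [integrableExpSet_expDensity_eq_univ hX hd hdX hφ hφX])

lemma integral_eq_of_forall_mgf_le {L D : ℝ} (h0 : 0 ∈ interior (integrableExpSet φ μ))
    (hmin : ∀ t, mgf φ μ 0 ≤ -t * L + t ^ 2 * D + mgf φ μ t) :
    ∫ x, φ x ∂μ = L := by
  have hquad : HasDerivAt (fun t : ℝ => -t * L + t ^ 2 * D) (-L) 0 := by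
    simpa using ((hasDerivAt_id' (0 : ℝ)).fun_neg.mul_const L).fun_add
      ((hasDerivAt_pow 2 (0 : ℝ)).mul_const D)
  have hderiv : HasDerivAt (fun t => -t * L + t ^ 2 * D + mgf φ μ t)
      (-L + ∫ x, φ x ∂μ) 0 := by
    simpa using hquad.fun_add (hasDerivAt_mgf h0)
  have hloc : IsLocalMin (fun t => -t * L + t ^ 2 * D + mgf φ μ t) 0 :=
    IsMinOn.isLocalMin (fun t _ => by simpa using hmin t) Filter.univ_mem
  linarith [hloc.hasDerivAt_eq_zero hderiv]

end ExpMoments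

section Penalty

variable {cb ca w : ℝ}

def fpenDeriv (cb ca w V : ℝ) : ℝ := max cb (min (V * w) ca)

lemma fpenDeriv_mem_Icc (hcb : cb ≤ ca) (V : ℝ) : fpenDeriv cb ca w V ∈ Set.Icc cb ca :=
  ⟨le_max_left _ _, max_le hcb (min_le_right _ _)⟩

lemma mid_add_fpenDeriv_mem_Icc {b a : ℝ} (hba : b ≤ a) (V : ℝ) :
    (b + a) / 2 + fpenDeriv (b - (b + a) / 2) (a - (b + a) / 2) w V ∈ Set.Icc b a := by
  have := fpenDeriv_mem_Icc (w := w)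
    (show b - (b + a) / 2 ≤ a - (b + a) / 2 by linarith) V
  exact ⟨by linarith [this.1], by linarith [this.2]⟩

lemma abs_fpenDeriv_sub_le (hw : 0 ≤ w) (V V' : ℝ) :
    |fpenDeriv cb ca w V - fpenDeriv cb ca w V'| ≤ w * |V - V'| := by
  refine (abs_max_sub_max_le_max _ _ _ _).trans (max_le (by simp; positivity) ?_)
  refine (abs_min_sub_min_le_max _ _ _ _).trans (max_le ?_ (by simp; positivity))
  rw [← sub_mul, abs_mul, abs_of_nonneg hw, mul_comm]

/- `fpen V = max_{c ∈ [cb, ca]} (c V - c² / (2w))`, the maximum being attained at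
`c = fpenDeriv V`. -/

lemma fpen_eq_fpenDeriv (hw : w ≠ 0) (hcb : cb ≤ ca) (V : ℝ) :
    fpen cb ca w V = fpenDeriv cb ca w V * V - fpenDeriv cb ca w V ^ 2 / (2 * w) := by
  unfold fpen fpenDeriv
  split_ifs with hmid hask
  · rw [min_eq_left hmid.2, max_eq_right hmid.1]; field_simp; ring
  · rw [min_eq_right hask.le, max_eq_right hcb]
  · have hbid : V * w < cb := by
      by_contra! h; exact hmid ⟨h, not_lt.mp hask⟩
    rw [min_eq_left (not_lt.mp hask), max_eq_left hbid.le]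

lemma mul_sub_sq_div_le_fpen (hw : 0 < w) {c : ℝ} (hc : c ∈ Set.Icc cb ca) (V : ℝ) :
    c * V - c ^ 2 / (2 * w) ≤ fpen cb ca w V := by
  obtain ⟨hcb, hca⟩ := hc
  unfold fpen
  split_ifs with hmid hask
  · have hgap : V ^ 2 * w / 2 - (c * V - c ^ 2 / (2 * w)) = (V * w - c) ^ 2 / (2 * w) := by
      field_simp; ring
    have : 0 ≤ (V * w - c) ^ 2 / (2 * w) := by positivity
    linarith
  · have hgap : ca * V - ca ^ 2 / (2 * w) - (c * V - c ^ 2 / (2 * w))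
        = (ca - c) * (2 * (V * w) - ca - c) / (2 * w) := by
      field_simp; ring
    have : 0 ≤ (ca - c) * (2 * (V * w) - ca - c) / (2 * w) :=
      div_nonneg (mul_nonneg (by linarith) (by linarith)) (by linarith)
    linarith
  · have hbid : V * w < cb := by
      by_contra! h; exact hmid ⟨h, not_lt.mp hask⟩
    have hgap : cb * V - cb ^ 2 / (2 * w) - (c * V - c ^ 2 / (2 * w))
        = (c - cb) * (c + cb - 2 * (V * w)) / (2 * w) := by
      field_simp; ring
    have : 0 ≤ (c - cb) * (c + cb - 2 * (V * w)) / (2 * w) :=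
      div_nonneg (mul_nonneg (by linarith) (by linarith)) (by linarith)
    linarith

lemma fpen_add_le (hw : 0 < w) (hcb : cb ≤ ca) (V t : ℝ) :
    fpen cb ca w (V + t) ≤ fpen cb ca w V + t * fpenDeriv cb ca w V + w * t ^ 2 := by
  set c := fpenDeriv cb ca w V
  set c' := fpenDeriv cb ca w (V + t)
  have hc' : c' * V - c' ^ 2 / (2 * w) ≤ fpen cb ca w V :=
    mul_sub_sq_div_le_fpen hw (fpenDeriv_mem_Icc hcb _) V
  have hlip : (c' - c) * t ≤ w * t ^ 2 :=
    calc (c' - c) * t ≤ |c' - c| * |t| := (le_abs_self _).trans (abs_mul _ _).le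
      _ ≤ w * |V + t - V| * |t| := by gcongr; exact abs_fpenDeriv_sub_le hw.le _ _
      _ = w * t ^ 2 := by rw [add_sub_cancel_left, mul_assoc, abs_mul_abs_self, sq]
  rw [fpen_eq_fpenDeriv hw.ne' hcb (V + t)]
  linarith

end Penalty

section GridPayoff

variable {X1 : Finset ℝ} {k : ℕ} (K : Fin k → ℝ)

lemma measurable_Dlt (u h : X1 → ℝ) (V : Fin k → ℝ) : Measurable (Dlt X1 K u h V) := by
  unfold Dlt
  refine (Finset.measurable_sum _ fun a _ => Measurable.ite ?_ (by fun_prop) (by fun_prop)).add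
    (Finset.measurable_sum _ fun i _ => by fun_prop)
  exact measurableSet_eq_fun measurable_const measurable_fst

lemma Dlt_sub_smul (u h u' h' : X1 → ℝ) (V V' : Fin k → ℝ) (t : ℝ) (p : ℝ × ℝ) :
    Dlt X1 K (u - t • u') (h - t • h') (V - t • V') p
      = Dlt X1 K u h V p - t * Dlt X1 K u' h' V' p := by
  simp only [Dlt, Pi.sub_apply, Pi.smul_apply, smul_eq_mul, mul_add, Finset.mul_sum]
  rw [add_sub_add_comm, ← Finset.sum_sub_distrib, ← Finset.sum_sub_distrib]
  congr 1
  · refine Finset.sum_congr rfl fun a _ => ?_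
    split_ifs <;> ring
  · refine Finset.sum_congr rfl fun i _ => ?_
    ring

lemma abs_Dlt_le (u h : X1 → ℝ) (V : Fin k → ℝ) :
    ∃ A B : ℝ, ∀ p : ℝ × ℝ, |Dlt X1 K u h V p| ≤ A + B * |p.2| := by
  refine ⟨∑ a ∈ X1.attach, (|u a| + |h a| * |(a : ℝ)|) + ∑ i, |V i| * |K i|,
    ∑ a ∈ X1.attach, |h a| + ∑ i, |V i|, fun p => ?_⟩
  have hgrid : |∑ a ∈ X1.attach, if (a : ℝ) = p.1 then u a + h a * (p.2 - p.1) else 0|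
      ≤ ∑ a ∈ X1.attach, (|u a| + |h a| * |(a : ℝ)| + |h a| * |p.2|) := by
    refine (Finset.abs_sum_le_sum_abs _ _).trans (Finset.sum_le_sum fun a _ => ?_)
    split_ifs with ha
    · calc |u a + h a * (p.2 - p.1)| ≤ |u a| + |h a| * |p.2 - a| := by
            rw [← ha, ← abs_mul]; exact abs_add_le _ _
        _ ≤ |u a| + |h a| * (|p.2| + |(a : ℝ)|) := by
            gcongr; exact abs_sub _ _
        _ = _ := by ring
    · rw [abs_zero]; positivity
  have hcall : |∑ i, V i * max (p.2 - K i) 0| ≤ ∑ i, (|V i| * |K i| + |V i| * |p.2|) := by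
    refine (Finset.abs_sum_le_sum_abs _ _).trans (Finset.sum_le_sum fun i _ => ?_)
    rw [abs_mul, ← mul_add]
    gcongr
    rw [abs_of_nonneg (le_max_right _ _)]
    exact max_le (by linarith [neg_abs_le (K i), le_abs_self p.2]) (by positivity)
  calc |Dlt X1 K u h V p| ≤ _ + _ := abs_add_le _ _
    _ ≤ _ := add_le_add hgrid hcall
    _ = _ := by simp only [Finset.sum_add_distrib, ← Finset.sum_mul]; ring

lemma Dlt_single_zero_zero [DecidableEq X1] (a : X1) :
    Dlt X1 K (Pi.single a 1) 0 0 = {q : ℝ × ℝ | q.1 = a}.indicator 1 := by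
  ext p
  rw [Dlt, Finset.sum_eq_single a (fun b _ hb => by simp [hb]) (by simp)]
  simp [Set.indicator_apply, eq_comm]

lemma Dlt_zero_single_zero [DecidableEq X1] (a : X1) :
    Dlt X1 K 0 (Pi.single a 1) 0 = {q : ℝ × ℝ | q.1 = a}.indicator fun q => q.2 - q.1 := by
  ext p
  rw [Dlt, Finset.sum_eq_single a (fun b _ hb => by simp [hb]) (by simp)]
  simp [Set.indicator_apply, eq_comm]

lemma Dlt_zero_zero_single (i : Fin k) :
    Dlt X1 K 0 0 (Pi.single i 1) = fun p => max (p.2 - K i) 0 := by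
  ext p
  simp [Dlt, Pi.single_apply]

lemma Dlt_one_zero_zero {p : ℝ × ℝ} (hp : p.1 ∈ X1) : Dlt X1 K 1 0 0 p = 1 := by
  simp only [Dlt, Pi.one_apply, Pi.zero_apply, zero_mul, add_zero, Finset.sum_const_zero]
  rw [Finset.sum_attach X1 fun x => if x = p.1 then (1 : ℝ) else 0, Finset.sum_ite_eq' X1 p.1,
    if_pos hp]

end GridPayoff

section FirstOrderConditions

variable {X1 : Finset ℝ} {P1 : ℝ → ℝ} {k : ℕ} {K : Fin k → ℝ} {Cbid Cask ω : Fin k → ℝ}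
  {m0 : Measure (ℝ × ℝ)}

lemma sum_fpen_sub_smul_le (hba : ∀ i, Cbid i ≤ Cask i) (hω : ∀ i, 0 < ω i)
    (V V' : Fin k → ℝ) (t : ℝ) :
    ∑ i, fpen (Cbid i - (Cbid i + Cask i) / 2) (Cask i - (Cbid i + Cask i) / 2) (ω i)
        ((V - t • V') i)
      ≤ ∑ i, fpen (Cbid i - (Cbid i + Cask i) / 2) (Cask i - (Cbid i + Cask i) / 2) (ω i) (V i)
        - t * ∑ i, V' i * fpenDeriv (Cbid i - (Cbid i + Cask i) / 2)
            (Cask i - (Cbid i + Cask i) / 2) (ω i) (V i)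
        + t ^ 2 * ∑ i, ω i * V' i ^ 2 := by
  rw [Finset.mul_sum, Finset.mul_sum, ← Finset.sum_sub_distrib, ← Finset.sum_add_distrib]
  refine Finset.sum_le_sum fun i _ => ?_
  have := fpen_add_le (hω i)
    (show Cbid i - (Cbid i + Cask i) / 2 ≤ Cask i - (Cbid i + Cask i) / 2 by linarith [hba i])
    (V i) (-(t * V' i))
  rw [← sub_eq_add_neg (V i)] at this
  simp only [Pi.sub_apply, Pi.smul_apply, smul_eq_mul]
  linarith

theorem integral_Dlt_eq_of_isMinimizer (hba : ∀ i, Cbid i ≤ Cask i) (hω : ∀ i, 0 < ω i)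
    (hm0 : integrableExpSet Prod.snd m0 = Set.univ) {ustar hstar : X1 → ℝ} {Vstar : Fin k → ℝ}
    (hmin : ∀ (u h : X1 → ℝ) (V : Fin k → ℝ),
      Gfun X1 P1 K Cbid Cask ω m0 ustar hstar Vstar ≤ Gfun X1 P1 K Cbid Cask ω m0 u h V)
    (u h : X1 → ℝ) (V : Fin k → ℝ) :
    ∫ p, Dlt X1 K u h V p ∂expDensity m0 (Dlt X1 K ustar hstar Vstar)
      = ∑ a ∈ X1.attach, u a * P1 a + ∑ i, V i * ((Cbid i + Cask i) / 2 +
          fpenDeriv (Cbid i - (Cbid i + Cask i) / 2) (Cask i - (Cbid i + Cask i) / 2) (ω i)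
            (Vstar i)) := by
  obtain ⟨A, B, hd⟩ := abs_Dlt_le K ustar hstar Vstar
  obtain ⟨A', B', hφ⟩ := abs_Dlt_le K u h V
  have hexp := integrableExpSet_expDensity_eq_univ hm0 (measurable_Dlt K _ _ _) hd
    (measurable_Dlt K _ _ _) hφ
  have hmgf : ∀ t, mgf (Dlt X1 K u h V) (expDensity m0 (Dlt X1 K ustar hstar Vstar)) t
      = ∫ p, exp (-Dlt X1 K (ustar - t • u) (hstar - t • h) (Vstar - t • V) p) ∂m0 := fun t => by
    rw [mgf, integral_expDensity (measurable_Dlt K _ _ _)]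
    simp only [Dlt_sub_smul, neg_sub, ← exp_add, neg_add_eq_sub]
  refine integral_eq_of_forall_mgf_le (D := ∑ i, ω i * V i ^ 2) (by simp [hexp]) fun t => ?_
  have hG := hmin (ustar - t • u) (hstar - t • h) (Vstar - t • V)
  have hpen := sum_fpen_sub_smul_le hba hω Vstar V t
  simp only [Gfun, ← hmgf] at hG
  have hmgf0 := hmgf 0
  simp only [zero_smul, sub_zero] at hmgf0
  rw [hmgf0]
  simp only [Pi.sub_apply, Pi.smul_apply, smul_eq_mul, sub_mul, mul_assoc, Finset.sum_sub_distrib,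
    ← Finset.mul_sum, mul_add, Finset.sum_add_distrib] at hG hpen ⊢
  linarith

lemma isProbabilityMeasure_expDensity_of_isMinimizer (hba : ∀ i, Cbid i ≤ Cask i)
    (hω : ∀ i, 0 < ω i) (hm0 : integrableExpSet Prod.snd m0 = Set.univ)
    (hgrid : ∀ᵐ p ∂m0, p.1 ∈ X1) (hP1sum : ∑ s ∈ X1, P1 s = 1)
    {ustar hstar : X1 → ℝ} {Vstar : Fin k → ℝ}
    (hmin : ∀ (u h : X1 → ℝ) (V : Fin k → ℝ),
      Gfun X1 P1 K Cbid Cask ω m0 ustar hstar Vstar ≤ Gfun X1 P1 K Cbid Cask ω m0 u h V) :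
    IsProbabilityMeasure (expDensity m0 (Dlt X1 K ustar hstar Vstar)) := by
  have hmass := integral_Dlt_eq_of_isMinimizer hba hω hm0 hmin 1 0 0
  rw [integral_congr_ae (expDensity_absolutelyContinuous.ae_le
    (hgrid.mono fun p hp => Dlt_one_zero_zero K hp))] at hmass
  simp only [integral_const, smul_eq_mul, mul_one, Pi.one_apply, one_mul, Pi.zero_apply,
    zero_mul, Finset.sum_const_zero, add_zero, Finset.sum_attach X1 P1, hP1sum] at hmass
  exact ⟨ENNReal.toReal_eq_one_iff _ |>.mp hmass⟩

end FirstOrderConditions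

theorem stmt3_general (X1 : Finset ℝ)
    (P1 : ℝ → ℝ) (hP1sum : ∑ s ∈ X1, P1 s = 1)
    (k : ℕ) (K : Fin k → ℝ)
    (Cbid Cask : Fin k → ℝ) (hba : ∀ i, Cbid i ≤ Cask i)
    (ω : Fin k → ℝ) (hω : ∀ i, 0 < ω i)
    (m0 : Measure (ℝ × ℝ))
    (hm0supp : m0 {p : ℝ × ℝ | p.1 ∈ X1 ∧ 0 ≤ p.2}ᶜ = 0)
    (hm0exp : ∀ a : ℝ, Integrable (fun p : ℝ × ℝ => Real.exp (a * p.2)) m0)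
    (ustar hstar : X1 → ℝ) (Vstar : Fin k → ℝ)
    (hmin : ∀ (u h : X1 → ℝ) (V : Fin k → ℝ),
      Gfun X1 P1 K Cbid Cask ω m0 ustar hstar Vstar ≤ Gfun X1 P1 K Cbid Cask ω m0 u h V) :
    MemM12 X1 P1 K Cbid Cask
      (m0.withDensity
        (fun p => ENNReal.ofReal (Real.exp (-(Dlt X1 K ustar hstar Vstar p))))) := by
  classical
  have hm0 : integrableExpSet Prod.snd m0 = Set.univ := Set.eq_univ_of_forall hm0exp
  have hsupp : ∀ᵐ p ∂m0, p.1 ∈ X1 ∧ 0 ≤ p.2 := ae_iff.mpr hm0supp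
  have hprob := isProbabilityMeasure_expDensity_of_isMinimizer hba hω hm0
    (hsupp.mono fun _ hp => hp.1) hP1sum hmin
  have foc := integral_Dlt_eq_of_isMinimizer hba hω hm0 hmin
  obtain ⟨A, B, hd⟩ := abs_Dlt_le K ustar hstar Vstar
  have hfiber (s : ℝ) : MeasurableSet {q : ℝ × ℝ | q.1 = s} :=
    measurableSet_eq_fun measurable_fst measurable_const
  have hS : MeasurableSet {p : ℝ × ℝ | p.1 ∈ X1 ∧ 0 ≤ p.2} :=
    (measurable_fst X1.finite_toSet.measurableSet).inter
      (measurableSet_le measurable_const measurable_snd)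
  show MemM12 X1 P1 K Cbid Cask (expDensity m0 (Dlt X1 K ustar hstar Vstar))
  refine ⟨hprob, (prob_compl_eq_zero_iff hS).mp (ae_iff.mp
      (expDensity_absolutelyContinuous.ae_le hsupp)),
    integrable_expDensity_of_abs_le hm0 (measurable_Dlt K _ _ _) hd measurable_snd
      (A' := 0) (B' := 1) (by simp), fun s hs => ?_, fun s hs => ?_, fun i => ?_⟩
  · rw [← measureReal_def, ← integral_indicator_one (hfiber s),
      ← Dlt_single_zero_zero K ⟨s, hs⟩, foc]
    simp [Pi.single_apply]
  · rw [← integral_indicator (hfiber s), ← Dlt_zero_single_zero K ⟨s, hs⟩, foc]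
    simp
  · rw [← Dlt_zero_zero_single K, foc]
    simpa [Pi.single_apply] using mid_add_fpenDeriv_mem_Icc (hba i) (Vstar i)

/-- if `(u₁*, h₁*, V*)` is a global minimizer of `G`, then the measure
`ℙ*(ds₁,ds₂) = exp(−Δ_{(u₁*,h₁*,V*)}(s₁,s₂)) m₀(ds₁,ds₂)` belongs to `M̃₁₂(ℙ¹)`. -/
theorem stmt3 (X1 : Finset ℝ) (hX1ne : X1.Nonempty) (hX1 : ∀ s ∈ X1, 0 ≤ s)
    (P1 : ℝ → ℝ) (hP1pos : ∀ s ∈ X1, 0 < P1 s) (hP1sum : ∑ s ∈ X1, P1 s = 1)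
    (k : ℕ) (K : Fin k → ℝ) (hK : StrictMono K) (hKpos : ∀ i, 0 < K i)
    (Cbid Cask : Fin k → ℝ) (hba : ∀ i, Cbid i ≤ Cask i)
    (ω : Fin k → ℝ) (hω : ∀ i, 0 < ω i)
    (m0 : Measure (ℝ × ℝ)) [IsFiniteMeasure m0]
    (hm0supp : m0 {p : ℝ × ℝ | p.1 ∈ X1 ∧ 0 ≤ p.2}ᶜ = 0)
    (hm0exp : ∀ a : ℝ, Integrable (fun p : ℝ × ℝ => Real.exp (a * p.2)) m0)
    (ustar hstar : X1 → ℝ) (Vstar : Fin k → ℝ)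
    (hmin : ∀ (u h : X1 → ℝ) (V : Fin k → ℝ),
      Gfun X1 P1 K Cbid Cask ω m0 ustar hstar Vstar ≤ Gfun X1 P1 K Cbid Cask ω m0 u h V) :
    MemM12 X1 P1 K Cbid Cask
      (m0.withDensity
        (fun p => ENNReal.ofReal (Real.exp (-(Dlt X1 K ustar hstar Vstar p))))) :=
  stmt3_general X1 P1 hP1sum k K Cbid Cask hba ω hω m0 hm0supp hm0exp ustar hstar Vstar hmin
end
end

section
/- Let N denote the standard normal cumulative distribution function, and for S_0 > 0, K > 0, ω > 0 define BS(S_0,K,ω) := S_0 N(d_+) − K N(d_−) with d_± := ln(S_0/K)/ω ± ω/2. Then ω ↦ BS(S_0,K,ω) is continuous and strictly increasing on (0,∞), with lim_{ω→0⁺} BS(S_0,K,ω) = (S_0 − K)_+ and lim_{ω→∞} BS(S_0,K,ω) = S_0. Consequently, for every price p ∈ ((S_0 − K)_+, S_0) there exists a unique ω > 0 with BS(S_0,K,ω) = p (uniqueness of the implied volatility). -/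
/-!
Write `m = log (S₀ / K)` and `d± = m / ω ± ω / 2`. Since `d₊² − d₋² = 2m`, the Gaussian densities
satisfy `K φ(d₋) = S₀ φ(d₊)`, so in the derivative of the price the two terms coming from
`∂d±/∂ω` cancel except for `S₀ φ(d₊) > 0` (the vega), which gives strict monotonicity. As `ω → ∞`,
`d₊ → ∞` and `d₋ → −∞`; as `ω → 0⁺` both `d±` tend to `±∞` according to the sign of `m` (or to `0`
when `S₀ = K`). Existence and uniqueness of the implied volatility then follow from the
intermediate value theorem and injectivity.
-/

open Real MeasureTheory Filter Set Topology

section IntegralIic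

variable {E : Type*} [NormedAddCommGroup E] [NormedSpace ℝ E] {f : ℝ → E}

theorem integral_Iic_eq_add_intervalIntegral (hf : Integrable f) (a b : ℝ) :
    ∫ t in Iic b, f t = (∫ t in Iic a, f t) + ∫ t in a..b, f t := by
  rw [← intervalIntegral.integral_Iic_sub_Iic hf.integrableOn hf.integrableOn, add_sub_cancel]

theorem hasDerivAt_integral_Iic [CompleteSpace E] (hf : Integrable f) {x : ℝ}
    (hx : ContinuousAt f x) : HasDerivAt (fun y => ∫ t in Iic y, f t) (f x) x := by
  rw [funext (integral_Iic_eq_add_intervalIntegral hf 0)]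
  exact (intervalIntegral.integral_hasDerivAt_right hf.intervalIntegrable
    hf.aestronglyMeasurable.stronglyMeasurableAtFilter hx).const_add _

theorem tendsto_integral_Iic_atTop (hf : Integrable f) :
    Tendsto (fun y => ∫ t in Iic y, f t) atTop (𝓝 (∫ t, f t)) := by
  simpa [iUnion_Iic] using tendsto_setIntegral_of_monotone (fun _ => measurableSet_Iic)
    (fun _ _ => Iic_subset_Iic.2) (iUnion_Iic (α := ℝ) ▸ hf.integrableOn)

theorem tendsto_integral_Iic_atBot (hf : Integrable f) :
    Tendsto (fun y => ∫ t in Iic y, f t) atBot (𝓝 0) := by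
  have h := (intervalIntegral_tendsto_integral_Iic 0 hf.integrableOn tendsto_id).const_sub
    (∫ t in Iic 0, f t)
  rw [sub_self] at h
  refine h.congr fun y => ?_
  rw [integral_Iic_eq_add_intervalIntegral hf 0 y, intervalIntegral.integral_symm y 0]
  abel

end IntegralIic

section StdNormal

theorem integrable_exp_neg_sq_div_two : Integrable fun t : ℝ => exp (-(t ^ 2) / 2) := by
  simpa [neg_div, div_eq_inv_mul] using integrable_exp_neg_mul_sq (b := 1 / 2) (by norm_num)

theorem integral_exp_neg_sq_div_two : ∫ t : ℝ, exp (-(t ^ 2) / 2) = √(2 * π) := by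
  simpa [neg_div, div_eq_inv_mul, div_inv_eq_mul, mul_comm] using integral_gaussian (1 / 2)

noncomputable def stdNormalCDF (x : ℝ) : ℝ :=
  (√(2 * π))⁻¹ * ∫ t in Iic x, exp (-(t ^ 2) / 2)

theorem hasDerivAt_stdNormalCDF (x : ℝ) :
    HasDerivAt stdNormalCDF ((√(2 * π))⁻¹ * exp (-(x ^ 2) / 2)) x :=
  (hasDerivAt_integral_Iic integrable_exp_neg_sq_div_two (by fun_prop)).const_mul _

@[fun_prop]
theorem continuous_stdNormalCDF : Continuous stdNormalCDF :=
  continuous_iff_continuousAt.2 fun x => (hasDerivAt_stdNormalCDF x).continuousAt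

theorem tendsto_stdNormalCDF_atTop : Tendsto stdNormalCDF atTop (𝓝 1) := by
  have h := (tendsto_integral_Iic_atTop integrable_exp_neg_sq_div_two).const_mul (√(2 * π))⁻¹
  rwa [integral_exp_neg_sq_div_two, inv_mul_cancel₀ (by positivity)] at h

theorem tendsto_stdNormalCDF_atBot : Tendsto stdNormalCDF atBot (𝓝 0) := by
  have h := (tendsto_integral_Iic_atBot integrable_exp_neg_sq_div_two).const_mul (√(2 * π))⁻¹
  rwa [mul_zero] at h

end StdNormal

section BlackScholes

noncomputable def blackScholesCall (S K ω : ℝ) : ℝ :=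
  S * stdNormalCDF (log (S / K) / ω + ω / 2) - K * stdNormalCDF (log (S / K) / ω - ω / 2)

variable {S K : ℝ}

theorem exp_neg_sq_sub_div_two (m : ℝ) {ω : ℝ} (hω : ω ≠ 0) :
    exp (-((m / ω - ω / 2) ^ 2) / 2) = exp m * exp (-((m / ω + ω / 2) ^ 2) / 2) := by
  rw [← exp_add]
  congr 1
  field_simp
  ring

theorem hasDerivAt_blackScholesCall (hS : 0 < S) (hK : 0 < K) {ω : ℝ} (hω : ω ≠ 0) :
    HasDerivAt (blackScholesCall S K)
      (S * ((√(2 * π))⁻¹ * exp (-((log (S / K) / ω + ω / 2) ^ 2) / 2))) ω := by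
  set m := log (S / K)
  have hdiv : HasDerivAt (fun x => m / x) (-(m / ω ^ 2)) ω := by
    simpa [div_eq_mul_inv] using (hasDerivAt_inv hω).const_mul m
  have hhalf : HasDerivAt (fun x : ℝ => x / 2) (1 / 2) ω := (hasDerivAt_id ω).div_const 2
  have h := (((hasDerivAt_stdNormalCDF _).comp ω (hdiv.add hhalf)).const_mul S).sub
    (((hasDerivAt_stdNormalCDF _).comp ω (hdiv.sub hhalf)).const_mul K)
  refine h.congr_deriv ?_
  have hKm : K * exp m = S := by rw [exp_log (div_pos hS hK)]; field_simp
  simp only [Pi.add_apply, Pi.sub_apply]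
  rw [exp_neg_sq_sub_div_two m hω, ← hKm]
  ring

theorem continuousAt_blackScholesCall {ω : ℝ} (hω : ω ≠ 0) :
    ContinuousAt (blackScholesCall S K) ω := by
  unfold blackScholesCall
  fun_prop (disch := exact hω)

theorem continuousOn_blackScholesCall : ContinuousOn (blackScholesCall S K) (Ioi 0) :=
  fun _ hω => (continuousAt_blackScholesCall (ne_of_gt hω)).continuousWithinAt

theorem strictMonoOn_blackScholesCall (hS : 0 < S) (hK : 0 < K) :
    StrictMonoOn (blackScholesCall S K) (Ioi 0) := by
  refine strictMonoOn_of_deriv_pos (convex_Ioi 0) continuousOn_blackScholesCall fun ω hω => ?_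
  rw [interior_Ioi] at hω
  rw [(hasDerivAt_blackScholesCall hS hK (ne_of_gt hω)).deriv]
  positivity

theorem tendsto_blackScholesCall {l : Filter ℝ} {u v : ℝ}
    (hplus : Tendsto (fun ω => stdNormalCDF (log (S / K) / ω + ω / 2)) l (𝓝 u))
    (hminus : Tendsto (fun ω => stdNormalCDF (log (S / K) / ω - ω / 2)) l (𝓝 v)) :
    Tendsto (blackScholesCall S K) l (𝓝 (S * u - K * v)) :=
  (hplus.const_mul S).sub (hminus.const_mul K)

theorem tendsto_blackScholesCall_atTop (S K : ℝ) :
    Tendsto (blackScholesCall S K) atTop (𝓝 S) := by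
  have hdiv : Tendsto (fun ω : ℝ => log (S / K) / ω) atTop (𝓝 0) :=
    tendsto_const_nhds.div_atTop tendsto_id
  have hhalf : Tendsto (fun ω : ℝ => ω / 2) atTop atTop := tendsto_id.atTop_div_const two_pos
  have hdminus : Tendsto (fun ω : ℝ => log (S / K) / ω - ω / 2) atTop atBot := by
    simpa only [sub_eq_add_neg, Function.comp_def] using
      hdiv.add_atBot (tendsto_neg_atTop_atBot.comp hhalf)
  simpa using tendsto_blackScholesCall (tendsto_stdNormalCDF_atTop.comp (hdiv.add_atTop hhalf))
    (tendsto_stdNormalCDF_atBot.comp hdminus)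

theorem tendsto_blackScholesCall_nhdsGT_zero (hS : 0 < S) (hK : 0 < K) :
    Tendsto (blackScholesCall S K) (𝓝[>] 0) (𝓝 (max (S - K) 0)) := by
  have hhalf : Tendsto (fun ω : ℝ => ω / 2) (𝓝[>] 0) (𝓝 0) := by
    simpa using ((tendsto_id (x := 𝓝 (0 : ℝ))).div_const 2).mono_left nhdsWithin_le_nhds
  rcases lt_trichotomy S K with hlt | rfl | hgt
  · have hlog : log (S / K) < 0 := log_neg (div_pos hS hK) ((div_lt_one hK).2 hlt)
    have hdiv : Tendsto (fun ω => log (S / K) / ω) (𝓝[>] 0) atBot := by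
      simpa [div_eq_mul_inv] using
        (tendsto_const_mul_atBot_of_neg hlog).2 tendsto_inv_nhdsGT_zero
    have hdminus : Tendsto (fun ω => log (S / K) / ω - ω / 2) (𝓝[>] 0) atBot := by
      simpa only [sub_eq_add_neg] using hdiv.atBot_add hhalf.neg
    rw [max_eq_right (sub_nonpos.2 hlt.le)]
    simpa using tendsto_blackScholesCall
      (tendsto_stdNormalCDF_atBot.comp (hdiv.atBot_add hhalf))
      (tendsto_stdNormalCDF_atBot.comp hdminus)
  · have hN0 := continuous_stdNormalCDF.tendsto 0
    have h := tendsto_blackScholesCall (S := S) (K := S) (hN0.comp (by simpa using hhalf))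
      (hN0.comp (by simpa using hhalf.neg))
    simpa using h
  · have hlog : 0 < log (S / K) := log_pos ((one_lt_div hK).2 hgt)
    have hdiv : Tendsto (fun ω => log (S / K) / ω) (𝓝[>] 0) atTop := by
      simpa [div_eq_mul_inv] using
        (tendsto_const_mul_atTop_of_pos hlog).2 tendsto_inv_nhdsGT_zero
    have hdminus : Tendsto (fun ω => log (S / K) / ω - ω / 2) (𝓝[>] 0) atTop := by
      simpa only [sub_eq_add_neg] using hdiv.atTop_add hhalf.neg
    rw [max_eq_left (sub_nonneg.2 hgt.le)]
    simpa using tendsto_blackScholesCall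
      (tendsto_stdNormalCDF_atTop.comp (hdiv.atTop_add hhalf))
      (tendsto_stdNormalCDF_atTop.comp hdminus)

end BlackScholes

theorem StrictMonoOn.existsUnique_eq_of_tendsto {f : ℝ → ℝ} {a l u : ℝ}
    (hcont : ContinuousOn f (Ioi a)) (hmono : StrictMonoOn f (Ioi a))
    (hl : Tendsto f (𝓝[>] a) (𝓝 l)) (hu : Tendsto f atTop (𝓝 u)) {p : ℝ} (hp : p ∈ Ioo l u) :
    ∃! x, a < x ∧ f x = p := by
  obtain ⟨x₀, hx₀p, hx₀⟩ : ∃ x, f x < p ∧ a < x :=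
    ((hl.eventually_lt_const hp.1).and self_mem_nhdsWithin).exists
  obtain ⟨x₁, hx₁p, hx₀₁⟩ : ∃ x, p < f x ∧ x₀ < x :=
    ((hu.eventually_const_lt hp.2).and (eventually_gt_atTop x₀)).exists
  have hsub : Icc x₀ x₁ ⊆ Ioi a := fun x hx => hx₀.trans_le hx.1
  obtain ⟨x, hx, hfx⟩ :=
    intermediate_value_Icc hx₀₁.le (hcont.mono hsub) ⟨hx₀p.le, hx₁p.le⟩
  exact ⟨x, ⟨hsub hx, hfx⟩, fun y ⟨hy, hfy⟩ => hmono.injOn hy (hsub hx) (hfy.trans hfx.symm)⟩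

/-- the Black–Scholes call price `ω ↦ BS(S₀, K, ω)` is continuous and
strictly increasing on `(0, ∞)`, tends to `(S₀ − K)₊` as `ω → 0⁺` and to `S₀` as
`ω → ∞`; consequently every price `p ∈ ((S₀ − K)₊, S₀)` is attained at a unique
total volatility `ω > 0` (uniqueness of the implied volatility). -/
theorem stmt12 (S0 K : ℝ) (hS0 : 0 < S0) (hK : 0 < K)
    (N : ℝ → ℝ)
    (hN : ∀ x, N x = (Real.sqrt (2 * Real.pi))⁻¹ * ∫ t in Set.Iic x, Real.exp (-(t ^ 2) / 2))
    (BS : ℝ → ℝ)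
    (hBS : ∀ ω, BS ω =
      S0 * N (Real.log (S0 / K) / ω + ω / 2) - K * N (Real.log (S0 / K) / ω - ω / 2)) :
    ContinuousOn BS (Set.Ioi 0) ∧
    StrictMonoOn BS (Set.Ioi 0) ∧
    Filter.Tendsto BS (nhdsWithin 0 (Set.Ioi 0)) (nhds (max (S0 - K) 0)) ∧
    Filter.Tendsto BS Filter.atTop (nhds S0) ∧
    (∀ p ∈ Set.Ioo (max (S0 - K) 0) S0, ∃! ω : ℝ, 0 < ω ∧ BS ω = p) := by
  obtain rfl : N = stdNormalCDF := funext hN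
  obtain rfl : BS = blackScholesCall S0 K := funext hBS
  have hcont := continuousOn_blackScholesCall (S := S0) (K := K)
  have hmono := strictMonoOn_blackScholesCall hS0 hK
  have hzero := tendsto_blackScholesCall_nhdsGT_zero hS0 hK
  have htop := tendsto_blackScholesCall_atTop S0 K
  exact ⟨hcont, hmono, hzero, htop,
    fun _ hp => hmono.existsUnique_eq_of_tendsto hcont hzero htop hp⟩
end

section
/- Let X and Y be integrable real random variables on a probability space with E[Y | σ(X)] = X almost surely, and let K_1 > K_2 ≥ 0 be real numbers. If E[(X − K_1)_+] > 0, then E[(Y − K_2)_+] > E[(X − K_1)_+] (the Calendar Vertical Spread is strictly positive). -/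
/-!
On `A = {X > K₁}`, an event of `σ(X)`, the tower property gives `∫_A Y = ∫_A X`, hence
`E[(X - K₁)₊] = ∫_A (X - K₁) = ∫_A (Y - K₂) - (K₁ - K₂) P(A) < ∫_A (Y - K₂) ≤ E[(Y - K₂)₊]`;
the inequality is strict because `E[(X - K₁)₊] > 0` forces `P(A) > 0`.
-/

open MeasureTheory

theorem setIntegral_eq_of_condExp_ae_eq {Ω E : Type*} [NormedAddCommGroup E] [NormedSpace ℝ E]
    [CompleteSpace E] {m m₀ : MeasurableSpace Ω} {μ : Measure[m₀] Ω} [IsFiniteMeasure μ]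
    (hm : m ≤ m₀) {f g : Ω → E} (hf : Integrable f μ) (hfg : μ[f|m] =ᵐ[μ] g) {s : Set Ω}
    (hs : MeasurableSet[m] s) :
    ∫ ω in s, f ω ∂μ = ∫ ω in s, g ω ∂μ := by
  have := isFiniteMeasure_trim (μ := μ) hm
  rw [← setIntegral_condExp hm hf hs]
  exact setIntegral_congr_ae (hm s hs) (hfg.mono fun ω h _ => h)

section

variable {Ω : Type*} [MeasurableSpace Ω] {μ : Measure Ω}

theorem setIntegral_sub_const [IsFiniteMeasure μ] {f : Ω → ℝ} (hf : Integrable f μ) (s : Set Ω)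
    (c : ℝ) : ∫ ω in s, (f ω - c) ∂μ = ∫ ω in s, f ω ∂μ - μ.real s * c := by
  rw [integral_sub hf.restrict (integrable_const c), setIntegral_const, smul_eq_mul]

theorem integral_max_sub_zero_eq_setIntegral {f : Ω → ℝ} (hf : Measurable f) (K : ℝ) :
    ∫ ω, max (f ω - K) 0 ∂μ = ∫ ω in {ω | K < f ω}, (f ω - K) ∂μ := by
  rw [← setIntegral_eq_integral_of_forall_compl_eq_zero (s := {ω | K < f ω})
    fun ω hω => max_eq_right (sub_nonpos.mpr (not_lt.mp hω))]
  exact setIntegral_congr_fun (measurableSet_lt measurable_const hf)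
    fun ω hω => max_eq_left (sub_nonneg.mpr hω.le)

theorem setIntegral_sub_le_integral_max_sub_zero [IsFiniteMeasure μ] {f : Ω → ℝ}
    (hf : Integrable f μ) (K : ℝ) (s : Set Ω) :
    ∫ ω in s, (f ω - K) ∂μ ≤ ∫ ω, max (f ω - K) 0 ∂μ := by
  have hfK : Integrable (fun ω => f ω - K) μ := hf.sub (integrable_const K)
  calc ∫ ω in s, (f ω - K) ∂μ ≤ ∫ ω in s, max (f ω - K) 0 ∂μ :=
        setIntegral_mono hfK.restrict hfK.pos_part.restrict fun ω => le_max_left _ _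
    _ ≤ ∫ ω, max (f ω - K) 0 ∂μ :=
        setIntegral_le_integral hfK.pos_part (Filter.Eventually.of_forall fun ω => le_max_right _ _)

end

theorem stmt14_general {Ω : Type*} [MeasurableSpace Ω] (P : Measure Ω) [IsProbabilityMeasure P]
    (X Y : Ω → ℝ) (hX : Measurable X)
    (hXi : Integrable X P) (hYi : Integrable Y P)
    (hmart : P[Y | MeasurableSpace.comap X inferInstance] =ᵐ[P] X)
    (K1 K2 : ℝ) (hK : K2 < K1)
    (hpos : 0 < ∫ ω, max (X ω - K1) 0 ∂P) :
    ∫ ω, max (X ω - K1) 0 ∂P < ∫ ω, max (Y ω - K2) 0 ∂P := by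
  set A : Set Ω := {ω | K1 < X ω}
  have hAσX : MeasurableSet[MeasurableSpace.comap X inferInstance] A :=
    ⟨Set.Ioi K1, measurableSet_Ioi, rfl⟩
  have hXA := integral_max_sub_zero_eq_setIntegral (μ := P) hX K1
  have hPA : 0 < P.real A := by
    refine measureReal_nonneg.lt_of_ne fun h => hpos.ne' ?_
    rw [hXA, setIntegral_measure_zero _ ((measureReal_eq_zero_iff).1 h.symm)]
  calc ∫ ω, max (X ω - K1) 0 ∂P = ∫ ω in A, X ω ∂P - P.real A * K1 := by
        rw [hXA, setIntegral_sub_const hXi]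
    _ = ∫ ω in A, Y ω ∂P - P.real A * K1 := by
        rw [setIntegral_eq_of_condExp_ae_eq hX.comap_le hYi hmart hAσX]
    _ < ∫ ω in A, Y ω ∂P - P.real A * K2 := by gcongr
    _ = ∫ ω in A, (Y ω - K2) ∂P := (setIntegral_sub_const hYi A K2).symm
    _ ≤ ∫ ω, max (Y ω - K2) 0 ∂P := setIntegral_sub_le_integral_max_sub_zero hYi K2 A

/-- strict positivity of the Calendar Vertical Spread. If `E[Y | σ(X)] = X`
a.s., `K₁ > K₂ ≥ 0` and `E[(X − K₁)₊] > 0`, then `E[(Y − K₂)₊] > E[(X − K₁)₊]`. -/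
theorem stmt14 {Ω : Type*} [MeasurableSpace Ω] (P : Measure Ω) [IsProbabilityMeasure P]
    (X Y : Ω → ℝ) (hX : Measurable X) (hY : Measurable Y)
    (hXi : Integrable X P) (hYi : Integrable Y P)
    (hmart : P[Y | MeasurableSpace.comap X inferInstance] =ᵐ[P] X)
    (K1 K2 : ℝ) (hK : K2 < K1) (hK2 : 0 ≤ K2)
    (hpos : 0 < ∫ ω, max (X ω - K1) 0 ∂P) :
    ∫ ω, max (X ω - K1) 0 ∂P < ∫ ω, max (Y ω - K2) 0 ∂P :=
  stmt14_general P X Y hX hXi hYi hmart K1 K2 hK hpos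
end

section
/- Let X, Y_1, Y_2 be integrable real random variables on a probability space with E[Y_1 | σ(X)] = X and E[Y_2 | σ(X)] = X almost surely, and let K_1 < K < K_2 be real numbers. Then (K_2 − K) · E[(Y_1 − K_1)_+] + (K − K_1) · E[(Y_2 − K_2)_+] ≥ (K_2 − K_1) · E[(X − K)_+]; equivalently, the Calendar Butterfly Spread (E[(Y_1−K_1)_+] − E[(X−K)_+])/(K − K_1) − (E[(X−K)_+] − E[(Y_2−K_2)_+])/(K_2 − K) is nonnegative. -/
/-!
Since `X = E[Yᵢ | σ(X)]`, each call price `E[(Yᵢ - c)₊]` dominates `E[(X - c)₊]`: this is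
conditional Jensen for the payoff, and only needs the defining property of the conditional
expectation on the `σ(X)`-measurable set `{X > c}`. The payoff `(x - c)₊` is convex in the
strike `c`, so `(K₂ - K₁)(x - K)₊ ≤ (K₂ - K)(x - K₁)₊ + (K - K₁)(x - K₂)₊` pointwise; integrating
it for `X` and applying the domination at strikes `K₁` and `K₂` gives the claim.
-/

open MeasureTheory

theorem call_payoff_convex_in_strike {K1 K K2 : ℝ} (h1 : K1 ≤ K) (h2 : K ≤ K2) (x : ℝ) :
    (K2 - K1) * max (x - K) 0 ≤ (K2 - K) * max (x - K1) 0 + (K - K1) * max (x - K2) 0 := by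
  have hK1 : 0 ≤ max (x - K1) 0 := le_max_right _ _
  have hK2 : 0 ≤ max (x - K2) 0 := le_max_right _ _
  rcases le_or_gt x K with hx | hx
  · rw [max_eq_right (by linarith)]
    nlinarith
  · rw [max_eq_left (by linarith), max_eq_left (by linarith)]
    nlinarith [le_max_left (x - K2) 0]

theorem integral_call_convex_in_strike {Ω : Type*} [MeasurableSpace Ω] {P : Measure Ω}
    [IsFiniteMeasure P] {X : Ω → ℝ} (hX : Integrable X P) {K1 K K2 : ℝ}
    (h1 : K1 ≤ K) (h2 : K ≤ K2) :
    (K2 - K1) * ∫ ω, max (X ω - K) 0 ∂P ≤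
      (K2 - K) * (∫ ω, max (X ω - K1) 0 ∂P) + (K - K1) * ∫ ω, max (X ω - K2) 0 ∂P := by
  have hcall (c : ℝ) : Integrable (fun ω => max (X ω - c) 0) P :=
    (hX.sub (integrable_const c)).pos_part
  rw [← integral_const_mul, ← integral_const_mul, ← integral_const_mul,
    ← integral_add ((hcall K1).const_mul _) ((hcall K2).const_mul _)]
  exact integral_mono ((hcall K).const_mul _) (((hcall K1).const_mul _).add
    ((hcall K2).const_mul _)) fun ω => call_payoff_convex_in_strike h1 h2 (X ω)

theorem integral_condExp_call_le {Ω : Type*} {m mΩ : MeasurableSpace Ω} {P : Measure Ω}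
    [IsFiniteMeasure P] (hm : m ≤ mΩ) {Y : Ω → ℝ} (hY : Integrable Y P) (c : ℝ) :
    ∫ ω, max (P[Y | m] ω - c) 0 ∂P ≤ ∫ ω, max (Y ω - c) 0 ∂P := by
  set A := {ω | c < P[Y | m] ω}
  have hAm : MeasurableSet[m] A :=
    measurableSet_lt measurable_const stronglyMeasurable_condExp.measurable
  have hA : MeasurableSet A := hm _ hAm
  have hYcall : Integrable (fun ω => max (Y ω - c) 0) P := (hY.sub (integrable_const c)).pos_part
  calc ∫ ω, max (P[Y | m] ω - c) 0 ∂P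
      = ∫ ω in A, (P[Y | m] ω - c) ∂P := by
        rw [← integral_indicator hA]
        congr 1 with ω
        by_cases hω : c < P[Y | m] ω
        · simp [A, hω, hω.le]
        · simp [A, hω, not_lt.mp hω]
    _ = ∫ ω in A, (Y ω - c) ∂P := by
        rw [integral_sub integrable_condExp.integrableOn (integrable_const c),
          integral_sub hY.integrableOn (integrable_const c), setIntegral_condExp hm hY hAm]
    _ ≤ ∫ ω in A, max (Y ω - c) 0 ∂P :=
        setIntegral_mono_on (hY.sub (integrable_const c)).integrableOn hYcall.integrableOn hA
          fun ω _ => le_max_left _ _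
    _ ≤ ∫ ω, max (Y ω - c) 0 ∂P :=
        setIntegral_le_integral hYcall (Filter.Eventually.of_forall fun ω => le_max_right _ _)

theorem integral_call_le_of_condExp_eq {Ω : Type*} {m mΩ : MeasurableSpace Ω} {P : Measure Ω}
    [IsFiniteMeasure P] (hm : m ≤ mΩ) {X Y : Ω → ℝ} (hY : Integrable Y P)
    (hmart : P[Y | m] =ᵐ[P] X) (c : ℝ) :
    ∫ ω, max (X ω - c) 0 ∂P ≤ ∫ ω, max (Y ω - c) 0 ∂P := by
  calc ∫ ω, max (X ω - c) 0 ∂P = ∫ ω, max (P[Y | m] ω - c) 0 ∂P :=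
        integral_congr_ae (hmart.mono fun ω hω => by simp only [hω])
    _ ≤ ∫ ω, max (Y ω - c) 0 ∂P := integral_condExp_call_le hm hY c

theorem stmt15_general {Ω : Type*} [MeasurableSpace Ω] (P : Measure Ω) [IsProbabilityMeasure P]
    (X Y1 Y2 : Ω → ℝ) (hX : Measurable X)
    (hXi : Integrable X P) (hY1i : Integrable Y1 P) (hY2i : Integrable Y2 P)
    (hmart1 : P[Y1 | MeasurableSpace.comap X inferInstance] =ᵐ[P] X)
    (hmart2 : P[Y2 | MeasurableSpace.comap X inferInstance] =ᵐ[P] X)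
    (K1 K K2 : ℝ) (h1 : K1 < K) (h2 : K < K2) :
    (K2 - K1) * ∫ ω, max (X ω - K) 0 ∂P ≤
      (K2 - K) * (∫ ω, max (Y1 ω - K1) 0 ∂P) + (K - K1) * (∫ ω, max (Y2 ω - K2) 0 ∂P) := by
  calc (K2 - K1) * ∫ ω, max (X ω - K) 0 ∂P
      ≤ (K2 - K) * (∫ ω, max (X ω - K1) 0 ∂P) + (K - K1) * ∫ ω, max (X ω - K2) 0 ∂P :=
        integral_call_convex_in_strike hXi h1.le h2.le
    _ ≤ (K2 - K) * (∫ ω, max (Y1 ω - K1) 0 ∂P) + (K - K1) * (∫ ω, max (Y2 ω - K2) 0 ∂P) :=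
        add_le_add
          (mul_le_mul_of_nonneg_left
            (integral_call_le_of_condExp_eq hX.comap_le hY1i hmart1 K1) (by linarith))
          (mul_le_mul_of_nonneg_left
            (integral_call_le_of_condExp_eq hX.comap_le hY2i hmart2 K2) (by linarith))

/-- nonnegativity of the Calendar Butterfly Spread. If `E[Y₁ | σ(X)] = X`
and `E[Y₂ | σ(X)] = X` a.s. and `K₁ < K < K₂`, then
`(K₂ − K)·E[(Y₁ − K₁)₊] + (K − K₁)·E[(Y₂ − K₂)₊] ≥ (K₂ − K₁)·E[(X − K)₊]`. -/
theorem stmt15 {Ω : Type*} [MeasurableSpace Ω] (P : Measure Ω) [IsProbabilityMeasure P]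
    (X Y1 Y2 : Ω → ℝ) (hX : Measurable X) (hY1 : Measurable Y1) (hY2 : Measurable Y2)
    (hXi : Integrable X P) (hY1i : Integrable Y1 P) (hY2i : Integrable Y2 P)
    (hmart1 : P[Y1 | MeasurableSpace.comap X inferInstance] =ᵐ[P] X)
    (hmart2 : P[Y2 | MeasurableSpace.comap X inferInstance] =ᵐ[P] X)
    (K1 K K2 : ℝ) (h1 : K1 < K) (h2 : K < K2) :
    (K2 - K1) * ∫ ω, max (X ω - K) 0 ∂P ≤
      (K2 - K) * (∫ ω, max (Y1 ω - K1) 0 ∂P) + (K - K1) * (∫ ω, max (Y2 ω - K2) 0 ∂P) :=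
  stmt15_general P X Y1 Y2 hX hXi hY1i hY2i hmart1 hmart2 K1 K K2 h1 h2
end
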